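/- arXiv:2311.14002 — 3 statements merged into one kernel-verified Lean document; each statement's English description precedes it below -/
import Mathlib

section
/- For every ε > 0 and every real U, the difference between f_ε(U) := |U|^{p-1}U/[ln(e+|U|)]^ε and f_0(U) := |U|^{p-1}U satisfies |f_ε(U) - f_0(U)| ≤ ε |U|^p ln(ln(e+|U|)). -/
open Real

/-
The ratio `f_ε(U) / f_0(U) = L^{-ε}`, with `L = ln(e+|U|) ≥ 1`, lies in `(0, 1]`, and for `y ≥ 1` one
has `1 - 1/y ≤ ln y`; with `y = L^ε` this gives `|f_ε(U) - f_0(U)| = |f_0(U)| (1 - L^{-ε}) ≤ ε |U|^p ln L`.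
-/

lemma abs_inv_sub_one_le_log {y : ℝ} (hy : 1 ≤ y) : |y⁻¹ - 1| ≤ log y := by
  have hy_inv : y⁻¹ ≤ 1 := inv_le_one_of_one_le₀ hy
  rw [abs_of_nonpos (by linarith), neg_sub]
  exact one_sub_inv_le_log_of_pos (by linarith)

lemma abs_abs_rpow_sub_one_mul_le (p x : ℝ) : |(|x| ^ (p - 1) * x)| ≤ |x| ^ p := by
  rcases eq_or_ne x 0 with rfl | hx
  · simpa using rpow_nonneg le_rfl p
  · rw [abs_mul, abs_of_nonneg (rpow_nonneg (abs_nonneg x) _),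
      rpow_sub_one (abs_ne_zero.mpr hx), div_mul_cancel₀ _ (abs_ne_zero.mpr hx)]

lemma one_le_log_exp_one_add {t : ℝ} (ht : 0 ≤ t) : 1 ≤ log (exp 1 + t) :=
  (le_log_iff_exp_le (by positivity)).mpr (by linarith)

theorem stmt_0_general (p : ℝ) (ε : ℝ) (hε : 0 < ε) (U : ℝ) :
    |(|U| ^ (p - 1) * U / (Real.log (Real.exp 1 + |U|)) ^ ε) - |U| ^ (p - 1) * U| ≤
      ε * |U| ^ p * Real.log (Real.log (Real.exp 1 + |U|)) := by
  set L := log (exp 1 + |U|)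
  have hL : 1 ≤ L := one_le_log_exp_one_add (abs_nonneg U)
  calc |(|U| ^ (p - 1) * U / L ^ ε) - |U| ^ (p - 1) * U|
      = |(|U| ^ (p - 1) * U)| * |(L ^ ε)⁻¹ - 1| := by
        rw [← abs_mul, mul_sub_one, div_eq_mul_inv]
    _ ≤ |U| ^ p * log (L ^ ε) :=
        mul_le_mul (abs_abs_rpow_sub_one_mul_le p U)
          (abs_inv_sub_one_le_log (one_le_rpow hL hε.le)) (abs_nonneg _)
          (rpow_nonneg (abs_nonneg U) p)
    _ = ε * |U| ^ p * log L := by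
        rw [log_rpow (by linarith)]
        ring

/-- For every `ε > 0` and every real `U`,
`|f_ε(U) - f_0(U)| ≤ ε |U|^p ln(ln(e+|U|))`, where
`f_ε(U) = |U|^{p-1} U / (ln(e+|U|))^ε` and `p > 1`. -/
theorem stmt_0 (p : ℝ) (hp : 1 < p) (ε : ℝ) (hε : 0 < ε) (U : ℝ) :
    |(|U| ^ (p - 1) * U / (Real.log (Real.exp 1 + |U|)) ^ ε) - |U| ^ (p - 1) * U| ≤
      ε * |U| ^ p * Real.log (Real.log (Real.exp 1 + |U|)) :=
  stmt_0_general p ε hε U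
end

section
/- For ε sufficiently small and all real U, |f_ε'(U) - f_0'(U)| ≤ ε |U|^{p-1} ( p ln(ln(e+|U|)) + 1/ln(e+|U|) ), where f_0'(U) = p|U|^{p-1}. -/
/-!
With `L = log (e + |U|) ≥ 1`, the product rule gives
`f_ε'(U) = p |U|^{p-1} L^{-ε} - ε |U|^{p-1} (|U| / (e + |U|)) L^{-ε-1}`, also at `U = 0` where
both terms vanish. The estimate then follows from `0 ≤ 1 - L^{-ε} ≤ ε log L` (which is
`1 - 1/y ≤ log y` for `y = L^ε`) and `L^{-ε-1} ≤ 1/L`. It holds for every `ε ≥ 0`.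
-/

open Real

theorem HasDerivAt.continuousAt_mul_of_eq_zero {𝕜 : Type*} [NontriviallyNormedField 𝕜]
    {f g : 𝕜 → 𝕜} {f' x : 𝕜} (hf : HasDerivAt f f' x) (hfx : f x = 0) (hg : ContinuousAt g x) :
    HasDerivAt (fun t => g t * f t) (g x * f') x := by
  rw [hasDerivAt_iff_tendsto_slope] at hf ⊢
  have hslope : ∀ t, slope (fun t => g t * f t) x t = g t * slope f x t := fun t => by
    simp only [slope_def_field, hfx, mul_zero, sub_zero, mul_div_assoc]
  exact ((hg.tendsto.mono_left nhdsWithin_le_nhds).mul hf).congr fun t => (hslope t).symm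

theorem one_le_log_exp_one_add_abs (t : ℝ) : 1 ≤ log (exp 1 + |t|) := by
  rw [le_log_iff_exp_le (by positivity)]
  exact le_add_of_nonneg_right (abs_nonneg t)

theorem hasDerivAt_abs_rpow_sub_one_mul_self {p : ℝ} (hp : 1 < p) (x : ℝ) :
    HasDerivAt (fun t => |t| ^ (p - 1) * t) (p * |x| ^ (p - 1)) x := by
  rcases eq_or_ne x 0 with rfl | hx
  · have hcont : ContinuousAt (fun t : ℝ => |t| ^ (p - 1)) 0 :=
      continuous_abs.continuousAt.rpow_const (Or.inr (by linarith))
    simpa [zero_rpow (by linarith : p - 1 ≠ 0)] using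
      (hasDerivAt_id (0 : ℝ)).continuousAt_mul_of_eq_zero rfl hcont
  · have habs : |x| ≠ 0 := abs_ne_zero.2 hx
    refine (((hasDerivAt_abs hx).rpow_const (p := p - 1) (Or.inl habs)).mul
      (hasDerivAt_id x)).congr_deriv ?_
    have hsub : |x| ^ (p - 1) = |x| ^ (p - 1 - 1) * |x| := by
      rw [← rpow_add_one habs]; ring_nf
    rw [hsub, ← self_mul_sign x]
    simp only [id]
    ring

theorem hasDerivAt_log_exp_one_add_abs_rpow (ε : ℝ) {x : ℝ} (hx : x ≠ 0) :
    HasDerivAt (fun t => log (exp 1 + |t|) ^ (-ε))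
      (SignType.sign x / (exp 1 + |x|) * (-ε) * log (exp 1 + |x|) ^ (-ε - 1)) x :=
  (((hasDerivAt_abs hx).const_add (exp 1)).log (by positivity)).rpow_const
    (Or.inl (one_pos.trans_le (one_le_log_exp_one_add_abs x)).ne')

theorem hasDerivAt_abs_rpow_sub_one_mul_self_div_log_rpow {p : ℝ} (hp : 1 < p) (ε x : ℝ) :
    HasDerivAt (fun t => |t| ^ (p - 1) * t / log (exp 1 + |t|) ^ ε)
      (p * |x| ^ (p - 1) * log (exp 1 + |x|) ^ (-ε)
        - ε * |x| ^ (p - 1) * (|x| / (exp 1 + |x|)) * log (exp 1 + |x|) ^ (-ε - 1)) x := by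
  have hf : (fun t => |t| ^ (p - 1) * t / log (exp 1 + |t|) ^ ε)
      = fun t => log (exp 1 + |t|) ^ (-ε) * (|t| ^ (p - 1) * t) := by
    funext t
    rw [rpow_neg (zero_le_one.trans (one_le_log_exp_one_add_abs t)), div_eq_inv_mul]
  rw [hf]
  rcases eq_or_ne x 0 with rfl | hx
  · have hcont : ContinuousAt (fun t : ℝ => log (exp 1 + |t|) ^ (-ε)) 0 := by
      refine ((continuous_const.add continuous_abs).continuousAt.log ?_).rpow_const ?_ <;>
        simp [(exp_pos 1).ne']
    simpa [zero_rpow (by linarith : p - 1 ≠ 0)] using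
      (hasDerivAt_abs_rpow_sub_one_mul_self hp 0).continuousAt_mul_of_eq_zero (by simp) hcont
  · refine ((hasDerivAt_log_exp_one_add_abs_rpow ε hx).mul
      (hasDerivAt_abs_rpow_sub_one_mul_self hp x)).congr_deriv ?_
    rw [← self_mul_sign x]
    ring

theorem one_sub_rpow_neg_le_mul_log {L ε : ℝ} (hL : 0 < L) :
    1 - L ^ (-ε) ≤ ε * log L := by
  simpa [rpow_neg hL.le, log_rpow hL] using one_sub_inv_le_log_of_pos (rpow_pos_of_pos hL ε)

theorem abs_mul_rpow_neg_sub_le {p ε a L r : ℝ} (hp : 0 < p) (hε : 0 ≤ ε) (ha : 0 ≤ a)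
    (hL : 1 ≤ L) (hr0 : 0 ≤ r) (hr1 : r ≤ 1) :
    |p * a * L ^ (-ε) - ε * a * r * L ^ (-ε - 1) - p * a| ≤ ε * a * (p * log L + 1 / L) := by
  have hL0 : 0 < L := one_pos.trans_le hL
  have hpow_le : L ^ (-ε) ≤ 1 := rpow_le_one_of_one_le_of_nonpos hL (neg_nonpos.2 hε)
  have hpow_sub_one : L ^ (-ε - 1) ≤ 1 / L := by
    rw [one_div, ← rpow_neg_one L]
    exact rpow_le_rpow_of_exponent_le hL (by linarith)
  have hgap : p * a * (1 - L ^ (-ε)) ≤ p * a * (ε * log L) :=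
    mul_le_mul_of_nonneg_left (one_sub_rpow_neg_le_mul_log hL0) (by positivity)
  have htail : r * L ^ (-ε - 1) ≤ 1 / L :=
    (mul_le_of_le_one_left (rpow_nonneg hL0.le _) hr1).trans hpow_sub_one
  have htail' : ε * a * (r * L ^ (-ε - 1)) ≤ ε * a * (1 / L) :=
    mul_le_mul_of_nonneg_left htail (by positivity)
  have hnonpos : p * a * L ^ (-ε) - ε * a * r * L ^ (-ε - 1) - p * a ≤ 0 := by
    have : 0 ≤ ε * a * r * L ^ (-ε - 1) := by positivity
    nlinarith [mul_le_mul_of_nonneg_left hpow_le (by positivity : 0 ≤ p * a)]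
  rw [abs_of_nonpos hnonpos]
  nlinarith

/-- For `ε` sufficiently small and all real `U`,
`|f_ε'(U) - f_0'(U)| ≤ ε |U|^{p-1} (p ln ln(e+|U|) + 1/ln(e+|U|))`,
where `f_0'(U) = p |U|^{p-1}` and `p = (n+2)/(n-2)`, `n ≥ 3`. -/
theorem stmt_3 (n : ℕ) (hn : 3 ≤ n) (p : ℝ) (hp : p = ((n : ℝ) + 2) / ((n : ℝ) - 2)) :
    ∃ ε₀ > (0 : ℝ), ∀ ε : ℝ, 0 ≤ ε → ε ≤ ε₀ → ∀ U : ℝ,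
      |deriv (fun t : ℝ => |t| ^ (p - 1) * t / (Real.log (Real.exp 1 + |t|)) ^ ε) U -
          p * |U| ^ (p - 1)| ≤
        ε * |U| ^ (p - 1) *
          (p * Real.log (Real.log (Real.exp 1 + |U|)) + 1 / Real.log (Real.exp 1 + |U|)) := by
  have hn3 : (3 : ℝ) ≤ n := by exact_mod_cast hn
  have hp1 : 1 < p := by
    rw [hp, lt_div_iff₀ (by linarith)]
    linarith
  refine ⟨1, one_pos, fun ε hε _ U => ?_⟩
  rw [(hasDerivAt_abs_rpow_sub_one_mul_self_div_log_rpow hp1 ε U).deriv]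
  have hpos : 0 < exp 1 + |U| := by positivity
  exact abs_mul_rpow_neg_sub_le (by linarith) hε (by positivity) (one_le_log_exp_one_add_abs U)
    (by positivity) ((div_le_one hpos).2 (by linarith [exp_pos 1]))
end

section
/- Let n ≥ 3, ξ₁, ξ₂ ∈ ℝⁿ and λ₂ > 0 with λ₂|ξ₁ − ξ₂| ≤ 1. Set δ₂ = δ_{(ξ₂,λ₂)} and δ̃₂ = δ_{(ξ₁,λ₂)}. Then there is a constant c depending only on n such that |δ₂(x) − δ̃₂(x)| ≤ c λ₂|ξ₁ − ξ₂| δ̃₂(x) for every x ∈ ℝⁿ. -/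
open Real

/-- The standard bubble `δ_{(a,λ)}(x) = c₀ λ^{(n-2)/2} / (1 + λ²|x-a|²)^{(n-2)/2}`
with `c₀ = (n(n-2))^{(n-2)/4}`. -/
noncomputable def bubble (n : ℕ) (a : EuclideanSpace ℝ (Fin n)) (lam : ℝ)
    (x : EuclideanSpace ℝ (Fin n)) : ℝ :=
  ((n : ℝ) * ((n : ℝ) - 2)) ^ (((n : ℝ) - 2) / 4) * lam ^ (((n : ℝ) - 2) / 2) /
    (1 + lam ^ 2 * ‖x - a‖ ^ 2) ^ (((n : ℝ) - 2) / 2)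

/-!
Moving the centre of a bubble while keeping its rate multiplies it by `r ^ q`, `q = (n - 2) / 2`,
where `r` is the ratio of the two factors `1 + λ²|x - ξᵢ|²`. Since `λ|x - ξ₁|` and `λ|x - ξ₂|` differ
by at most `t = λ|ξ₁ - ξ₂| ≤ 1`, we get `|log r| ≤ 2t`, and then
`|r ^ q - 1| = |exp (q log r) - 1| ≤ 2qt · exp (2qt)`, which is linear in `t`.
-/

namespace Real

theorem abs_exp_sub_one_le_abs_mul_exp_abs (u : ℝ) : |exp u - 1| ≤ |u| * exp |u| := by
  rcases le_total 0 u with hu | hu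
  · have hneg : 1 - u ≤ exp (-u) := by linarith [add_one_le_exp (-u)]
    have hinv : exp u * exp (-u) = 1 := by rw [← exp_add, add_neg_cancel, exp_zero]
    rw [abs_of_nonneg hu, abs_of_nonneg (by linarith [add_one_le_exp u])]
    nlinarith [exp_pos u]
  · rw [abs_of_nonpos hu, abs_of_nonpos (by linarith [exp_le_one_iff.2 hu])]
    nlinarith [add_one_le_exp u, one_le_exp (neg_nonneg.2 hu)]

theorem abs_rpow_sub_one_le {r q s : ℝ} (hr : 0 < r) (hq : 0 ≤ q) (hs : |log r| ≤ s) :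
    |r ^ q - 1| ≤ q * s * exp (q * s) := by
  have hu : |log r * q| ≤ q * s := by
    rw [abs_mul, abs_of_nonneg hq, mul_comm]
    exact mul_le_mul_of_nonneg_left hs hq
  calc |r ^ q - 1| = |exp (log r * q) - 1| := by rw [rpow_def_of_pos hr]
    _ ≤ |log r * q| * exp |log r * q| := abs_exp_sub_one_le_abs_mul_exp_abs _
    _ ≤ q * s * exp (q * s) :=
      mul_le_mul hu (exp_le_exp.2 hu) (exp_pos _).le ((abs_nonneg _).trans hu)

end Real

theorem log_one_add_sq_div_le {s₁ s₂ t : ℝ} (hs₁ : 0 ≤ s₁) (ht₀ : 0 ≤ t) (ht₁ : t ≤ 1)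
    (h : s₁ ≤ s₂ + t) : log ((1 + s₁ ^ 2) / (1 + s₂ ^ 2)) ≤ 2 * t := by
  have hB : 0 < 1 + s₂ ^ 2 := by positivity
  have hsq : s₁ ^ 2 ≤ (s₂ + t) ^ 2 := pow_le_pow_left₀ hs₁ h 2
  have hratio : (1 + s₁ ^ 2) / (1 + s₂ ^ 2) - 1 ≤ 2 * t := by
    rw [div_sub_one hB.ne', div_le_iff₀ hB]
    nlinarith [mul_nonneg ht₀ (sq_nonneg (s₂ - 1))]
  exact (log_le_sub_one_of_pos (by positivity)).trans hratio

theorem abs_log_one_add_sq_div_le {s₁ s₂ t : ℝ} (hs₁ : 0 ≤ s₁) (hs₂ : 0 ≤ s₂)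
    (h : |s₁ - s₂| ≤ t) (ht₁ : t ≤ 1) : |log ((1 + s₁ ^ 2) / (1 + s₂ ^ 2))| ≤ 2 * t := by
  have ht₀ : 0 ≤ t := (abs_nonneg _).trans h
  obtain ⟨h₁, h₂⟩ := abs_le.1 h
  refine abs_le.2 ⟨?_, log_one_add_sq_div_le hs₁ ht₀ ht₁ (by linarith)⟩
  rw [← neg_le_neg_iff, neg_neg, ← log_inv, inv_div]
  exact log_one_add_sq_div_le hs₂ ht₀ ht₁ (by linarith)

theorem bubble_eq_mul_rpow (n : ℕ) (a b : EuclideanSpace ℝ (Fin n)) (lam : ℝ)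
    (x : EuclideanSpace ℝ (Fin n)) :
    bubble n b lam x = bubble n a lam x *
      ((1 + (lam * ‖x - a‖) ^ 2) / (1 + (lam * ‖x - b‖) ^ 2)) ^ (((n : ℝ) - 2) / 2) := by
  have hA : 0 < 1 + (lam * ‖x - a‖) ^ 2 := by positivity
  have hB : 0 < 1 + (lam * ‖x - b‖) ^ 2 := by positivity
  have hAq := (rpow_pos_of_pos hA (((n : ℝ) - 2) / 2)).ne'
  have hBq := (rpow_pos_of_pos hB (((n : ℝ) - 2) / 2)).ne'
  simp only [bubble, ← mul_pow] at hAq hBq ⊢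
  rw [div_rpow hA.le hB.le]
  field_simp

theorem bubble_nonneg {n : ℕ} (hn : 2 ≤ n) (a : EuclideanSpace ℝ (Fin n)) {lam : ℝ}
    (hlam : 0 ≤ lam) (x : EuclideanSpace ℝ (Fin n)) : 0 ≤ bubble n a lam x := by
  have hn' : (0 : ℝ) ≤ n - 2 := by
    have : (2 : ℝ) ≤ n := by exact_mod_cast hn
    linarith
  unfold bubble
  positivity

/-- If `λ₂|ξ₁ - ξ₂| ≤ 1`, then `|δ_{(ξ₂,λ₂)}(x) - δ_{(ξ₁,λ₂)}(x)| ≤ c λ₂|ξ₁-ξ₂| δ_{(ξ₁,λ₂)}(x)`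
for a constant `c` depending only on `n`. -/
theorem stmt_11 (n : ℕ) (hn : 3 ≤ n) :
    ∃ c > (0 : ℝ), ∀ (ξ₁ ξ₂ : EuclideanSpace ℝ (Fin n)) (lam₂ : ℝ), 0 < lam₂ →
      lam₂ * ‖ξ₁ - ξ₂‖ ≤ 1 → ∀ x : EuclideanSpace ℝ (Fin n),
      |bubble n ξ₂ lam₂ x - bubble n ξ₁ lam₂ x| ≤
        c * (lam₂ * ‖ξ₁ - ξ₂‖) * bubble n ξ₁ lam₂ x := by
  have hn₂ : (0 : ℝ) < n - 2 := by
    have : (3 : ℝ) ≤ n := by exact_mod_cast hn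
    linarith
  refine ⟨(n - 2) * exp (n - 2), by positivity, fun ξ₁ ξ₂ lam hlam ht₁ x => ?_⟩
  set t := lam * ‖ξ₁ - ξ₂‖
  have hdist : |lam * ‖x - ξ₁‖ - lam * ‖x - ξ₂‖| ≤ t := by
    have h := abs_norm_sub_norm_le (x - ξ₁) (x - ξ₂)
    rw [sub_sub_sub_cancel_left ξ₁ ξ₂ x, norm_sub_rev ξ₂ ξ₁] at h
    rw [← mul_sub, abs_mul, abs_of_pos hlam]
    exact mul_le_mul_of_nonneg_left h hlam.le
  have hpow := abs_rpow_sub_one_le (q := ((n : ℝ) - 2) / 2) (by positivity) (by positivity)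
    (abs_log_one_add_sq_div_le (by positivity) (by positivity) hdist ht₁)
  have hqt : ((n : ℝ) - 2) / 2 * (2 * t) = (n - 2) * t := by ring
  rw [hqt] at hpow
  have hexp : exp ((n - 2) * t) ≤ exp (n - 2) :=
    exp_le_exp.2 (mul_le_of_le_one_right hn₂.le ht₁)
  have hδ := bubble_nonneg (by omega) ξ₁ hlam.le x
  rw [bubble_eq_mul_rpow n ξ₁ ξ₂, ← mul_sub_one, abs_mul, abs_of_nonneg hδ]
  calc bubble n ξ₁ lam x * |_ - 1|
      ≤ bubble n ξ₁ lam x * ((n - 2) * t * exp (n - 2)) :=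
        mul_le_mul_of_nonneg_left (hpow.trans (mul_le_mul_of_nonneg_left hexp (by positivity))) hδ
    _ = (n - 2) * exp (n - 2) * t * bubble n ξ₁ lam x := by ring
end
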